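/- arXiv:1101.2603 — 2 statements merged into one kernel-verified Lean document; each statement's English description precedes it below -/
import Mathlib

section
/- For any pair of coprime integers (p,q) with q odd, there exists a finite sequence (p_0,q_0)=(0,1), (p_1,q_1), ..., (p_n,q_n)=(p,q) of coprime integer pairs, each with odd second coordinate, such that consecutive pairs satisfy |p_i q_{i+1} - p_{i+1} q_i| = 1. -/
private def Conn (p q : ℤ) : Prop :=
  ∃ (n : ℕ) (f : Fin (n + 1) → ℤ × ℤ),
      f 0 = (0, 1) ∧ f (Fin.last n) = (p, q) ∧
      (∀ i, IsCoprime (f i).1 (f i).2 ∧ Odd (f i).2) ∧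
      (∀ i : Fin n,
        |(f i.castSucc).1 * (f i.succ).2 - (f i.succ).1 * (f i.castSucc).2| = 1)

private lemma conn_base : Conn 0 1 :=
  ⟨0, fun _ => (0, 1), rfl, rfl,
    fun _ => ⟨isCoprime_zero_left.2 isUnit_one, odd_one⟩, fun i => i.elim0⟩

private lemma conn_step {a b p q : ℤ} (h : Conn a b) (hc : IsCoprime p q) (hq : Odd q)
    (he : |a * q - p * b| = 1) : Conn p q := by
  obtain ⟨n, f, h0, hl, hall, hedge⟩ := h
  refine ⟨n + 1, Fin.snoc f (p, q), ?_, ?_, ?_, ?_⟩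
  · have : ((0 : Fin (n + 2))) = Fin.castSucc 0 := rfl
    rw [this, Fin.snoc_castSucc, h0]
  · exact Fin.snoc_last _ _
  · intro i
    refine Fin.lastCases ?_ ?_ i
    · rw [Fin.snoc_last]; exact ⟨hc, hq⟩
    · intro j; rw [Fin.snoc_castSucc]; exact hall j
  · intro i
    refine Fin.lastCases ?_ ?_ i
    · have h1 : (Fin.last n).castSucc = Fin.castSucc (Fin.last n) := rfl
      have h2 : (Fin.last n).succ = Fin.last (n + 1) := rfl
      rw [h1, h2, Fin.snoc_castSucc, Fin.snoc_last, hl]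
      simpa using he
    · intro j
      have h1 : (j.castSucc).succ = (j.succ).castSucc := (Fin.succ_castSucc j).symm
      rw [h1, Fin.snoc_castSucc, Fin.snoc_castSucc]
      exact hedge j

private lemma conn_nat_one : ∀ n : ℕ, Conn (n : ℤ) 1 ∧ Conn (-(n : ℤ)) 1 := by
  intro n
  induction n with
  | zero => simpa using And.intro conn_base conn_base
  | succ k ih =>
    constructor
    · refine conn_step ih.1 (isCoprime_one_right) odd_one ?_
      push_cast; rw [show (k : ℤ) * 1 - (k + 1) * 1 = -1 by ring]; simp
    · refine conn_step ih.2 (isCoprime_one_right) odd_one ?_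
      push_cast; rw [show (-(k : ℤ)) * 1 - (-(k + 1)) * 1 = 1 by ring]; simp

private lemma conn_int_one (p : ℤ) : Conn p 1 := by
  obtain ⟨n, rfl | rfl⟩ := Int.eq_nat_or_neg p
  · exact (conn_nat_one n).1
  · exact (conn_nat_one n).2

private lemma conn_all : ∀ m : ℕ, ∀ p q : ℤ, p.natAbs + q.natAbs = m →
    IsCoprime p q → Odd q → Conn p q := by
  intro m
  induction m using Nat.strong_induction_on with
  | _ m IH =>
    intro p q hm hpq hq
    obtain ⟨k, hk⟩ := hq
    rcases eq_or_ne q 1 with rfl | hq1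
    · exact conn_int_one p
    rcases eq_or_ne q (-1) with rfl | hqm1
    · refine conn_step (conn_int_one (1 - p)) hpq ⟨k, hk⟩ ?_
      rw [show (1 - p) * (-1) - p * 1 = -1 by ring]; simp
    -- now |q| ≥ 2 (in fact ≥ 3)
    have hq0 : q ≠ 0 := by rintro rfl; omega
    set Q : ℤ := |q| with hQdef
    have hQq : Q = q ∨ Q = -q := abs_choice q
    have hQpos : 0 < Q := abs_pos.mpr hq0
    have hQ2 : 2 ≤ Q := by rcases hQq with h | h <;> omega
    obtain ⟨a, b, hab⟩ := hpq
    have hv0 : p * a - (-b) * q = 1 := by linarith [hab]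
    set r : ℤ := a % Q with hrdef
    have hr0 : 0 ≤ r := Int.emod_nonneg a (by omega)
    have hrQ : r < Q := Int.emod_lt_of_pos a hQpos
    have hdvdr : Q ∣ a - r := ⟨a / Q, by rw [hrdef, Int.emod_def]; ring⟩
    have hrne : r ≠ 0 := by
      intro h0
      have hQa : Q ∣ a := by obtain ⟨c, hc⟩ := hdvdr; exact ⟨c, by omega⟩
      have hqa : q ∣ a := by
        rcases hQq with h | h
        · rw [← h]; exact hQa
        · rw [h, neg_dvd] at hQa; exact hQa
      obtain ⟨c, hc⟩ := hqa
      have : q ∣ 1 := ⟨p * c + b, by rw [← hab, hc]; ring⟩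
      have := Int.isUnit_iff.mp (isUnit_of_dvd_one this)
      tauto
    -- choose the odd representative
    set v : ℤ := if r % 2 = 1 then r else r - Q with hvdef
    have hQodd : Q % 2 = 1 := by rcases hQq with h | h <;> omega
    have hvodd : Odd v := by
      refine ⟨(v - 1) / 2, ?_⟩
      rw [hvdef]; split <;> omega
    have hvbd : -Q < v ∧ v < Q ∧ v ≠ 0 := by
      rw [hvdef]; split <;> refine ⟨by omega, by omega, by omega⟩
    have hQv : Q ∣ v - a := by
      obtain ⟨c, hc⟩ := hdvdr
      rw [hvdef]; split
      · exact ⟨-c, by linear_combination -hc⟩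
      · exact ⟨-c - 1, by linear_combination -hc⟩
    have hqv : q ∣ v - a := by
      rcases hQq with h | h
      · rwa [← h]
      · rw [h, neg_dvd] at hQv; exact hQv
    obtain ⟨c, hc⟩ := hqv
    set u : ℤ := -b + c * p with hudef
    have huv : p * v - u * q = 1 := by
      have : v = a + q * c := by linarith
      rw [this, hudef]; linear_combination hv0
    -- bound |u| ≤ |p|
    have habsv : |v| ≤ Q - 1 := by
      rw [abs_le]; omega
    have hubd : |u| ≤ |p| := by
      by_contra hcon
      push_neg at hcon
      have h1 : |u| * |q| = |p * v - 1| := by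
        rw [← abs_mul]; congr 1; linarith [huv]
      have h2 : |p * v - 1| ≤ |p| * |v| + 1 := by
        calc |p * v - 1| ≤ |p * v| + |(1 : ℤ)| := abs_sub _ _
        _ = |p| * |v| + 1 := by rw [abs_mul, abs_one]
      have h3 : |p| * |v| ≤ |p| * (Q - 1) := by
        exact mul_le_mul_of_nonneg_left habsv (abs_nonneg p)
      have h4 : (|p| + 1) * Q ≤ |u| * Q := by
        apply mul_le_mul_of_nonneg_right _ (le_of_lt hQpos)
        omega
      rw [hQdef] at *
      nlinarith [abs_nonneg p]
    -- apply the induction hypothesis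
    have hvQ : |v| < Q := by rw [abs_lt]; exact ⟨hvbd.1, hvbd.2.1⟩
    have hmeasure : u.natAbs + v.natAbs < m := by
      have h1 : (v.natAbs : ℤ) < (q.natAbs : ℤ) := by
        rwa [← Int.abs_eq_natAbs, ← Int.abs_eq_natAbs]
      have h2 : (u.natAbs : ℤ) ≤ (p.natAbs : ℤ) := by
        rwa [← Int.abs_eq_natAbs, ← Int.abs_eq_natAbs]
      omega
    have hcuv : IsCoprime u v := ⟨-q, p, by linear_combination huv⟩
    have hconn : Conn u v := IH _ hmeasure u v rfl hcuv hvodd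
    refine conn_step hconn ⟨a, b, hab⟩ ⟨k, hk⟩ ?_
    rw [abs_sub_comm, huv]; simp

/-- Connectivity of the Möbius band tree: every coprime pair `(p, q)` with `q` odd is joined
to `(0, 1)` by a finite sequence of coprime pairs with odd second coordinate in which
consecutive pairs satisfy `|p_i q_{i+1} - p_{i+1} q_i| = 1`. -/
theorem mobius_graph_connected (p q : ℤ) (hpq : IsCoprime p q) (hq : Odd q) :
    ∃ (n : ℕ) (f : Fin (n + 1) → ℤ × ℤ),
      f 0 = (0, 1) ∧ f (Fin.last n) = (p, q) ∧
      (∀ i, IsCoprime (f i).1 (f i).2 ∧ Odd (f i).2) ∧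
      (∀ i : Fin n,
        |(f i.castSucc).1 * (f i.succ).2 - (f i.succ).1 * (f i.castSucc).2| = 1) :=
  conn_all _ p q rfl hpq hq
end

section
/- Let A = [[a,b],[c,d]] ∈ SL(2,Z) with b,c even and a,d odd, and suppose some coprime pair (x,y) satisfies (ax+by)y - (cx+dy)x = 0. Then a + d = 2 or a + d = -2. -/
/-!
The condition says that `(x, y)` and its image under `A` are proportional, and coprimality makes
the factor an integer `n`: an integral eigenvalue with a primitive eigenvector. Substituting the
eigenvector into the characteristic polynomial gives `n * (tr A - n) = det A = 1`, so `n = ±1`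
and `tr A = 2 n = ±2`.
-/

variable {R : Type*} [CommRing R]

theorem IsCoprime.exists_eq_mul_and_eq_mul_of_mul_eq_mul {x y u v : R} (hxy : IsCoprime x y)
    (h : u * y = v * x) : ∃ n, u = n * x ∧ v = n * y := by
  obtain ⟨p, q, hpq⟩ := hxy
  exact ⟨p * u + q * v, by linear_combination -u * hpq + q * h,
    by linear_combination -v * hpq - p * h⟩

theorem eigenvalue_mul_trace_sub_eq_det {a b c d x y n : R} (hxy : IsCoprime x y)
    (hx : a * x + b * y = n * x) (hy : c * x + d * y = n * y) :
    n * (a + d - n) = a * d - b * c := by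
  obtain ⟨p, q, hpq⟩ := hxy
  -- The adjugate of `A - n` turns `(A - n) (x, y) = 0` into `det (A - n) • (x, y) = 0`;
  -- then `p x + q y = 1` gives `det (A - n) = 0`.
  linear_combination (q * c - p * (d - n)) * hx + (p * b - q * (a - n)) * hy
    + ((a - n) * (d - n) - b * c) * hpq

theorem vanishing_intersection_forces_trace_general (a b c d x y : ℤ) (hdet : a * d - b * c = 1)
    (hxy : IsCoprime x y)
    (h : (a * x + b * y) * y - (c * x + d * y) * x = 0) :
    a + d = 2 ∨ a + d = -2 := by
  obtain ⟨n, hx, hy⟩ := hxy.exists_eq_mul_and_eq_mul_of_mul_eq_mul (sub_eq_zero.mp h)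
  have key : n * (a + d - n) = 1 := hdet ▸ eigenvalue_mul_trace_sub_eq_det hxy hx hy
  rcases Int.isUnit_iff.mp (IsUnit.of_mul_eq_one _ key) with rfl | rfl
  · left; linarith
  · right; linarith

/-- If `A = [[a,b],[c,d]] ∈ SL(2,ℤ)` with `a`, `d` odd and `b`, `c` even, and some coprime
pair `(x, y)` satisfies `(ax+by)y - (cx+dy)x = 0`, then the trace `a + d` is `2` or `-2`. -/
theorem vanishing_intersection_forces_trace (a b c d x y : ℤ) (hdet : a * d - b * c = 1)
    (ha : Odd a) (hd : Odd d) (hb : Even b) (hc : Even c) (hxy : IsCoprime x y)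
    (h : (a * x + b * y) * y - (c * x + d * y) * x = 0) :
    a + d = 2 ∨ a + d = -2 :=
  vanishing_intersection_forces_trace_general a b c d x y hdet hxy h
end
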